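/- Let ℬ be a finite set of n×n self-adjoint complex matrices and let P be a unitary matrix such that conjugation by P brings every element of the matrix *-algebra 𝒯 generated by ℬ into a common block-diagonal form that is the finest possible for 𝒯 (i.e., each diagonal block acts irreducibly). Then this block-diagonal form is also the finest common block-diagonal form for the generating set ℬ itself: no invertible matrix can simultaneously bring all elements of ℬ into a strictly finer common block structure. -/

import Mathlib

/-!
Move the blocks of the finer structure into the frame of `P` by `star P * T`. Each moved block
is invariant under `star P * M * P` for every `M ∈ 𝒯`: the matrices stabilizing a subspace form
an algebra, and since the generators are self-adjoint, the matrices `X` with both `X` and `star X`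
stabilizing it form a *-algebra containing `ℬ`. The `ℓ'` moved blocks are independent and nonzero,
so their partial sums are a strict chain of length `ℓ'` of `𝒯`-invariant subspaces. These
subspaces form a modular lattice whose top is the join of the `ℓ` minimal blocks of `P`, and in
such a lattice joining one minimal element at a time to a chain shows that no strict chain is
longer than `ℓ`.
-/

open Finset Function Matrix Module.End
open Submodule (span)

theorem Sublattice.le_card_of_strictMono_of_le_sup {α ι : Type*} [Lattice α] [OrderBot α]
    [IsModularLattice α] [DecidableEq ι] {L : Sublattice α} {E : ι → α} (hE : ∀ j, E j ∈ L)
    (hE_min : ∀ j, ∀ U ∈ L, U ≤ E j → U = ⊥ ∨ U = E j) {k : ℕ} (J : Finset ι)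
    {c : Fin (k + 1) → α} (hcL : ∀ i, c i ∈ L) (hc : StrictMono c)
    (hle : c (Fin.last k) ≤ c 0 ⊔ J.sup E) : k ≤ #J := by
  induction k generalizing J with
  | zero => exact Nat.zero_le _
  | succ k ih =>
    set top := c (Fin.last k).castSucc
    obtain ⟨j, hjJ, hj⟩ : ∃ j ∈ J, ¬ E j ≤ top := by
      by_contra! h
      have : c (Fin.last (k + 1)) ≤ top :=
        hle.trans (sup_le (hc.monotone (Fin.zero_le _)) (Finset.sup_le h))
      exact this.not_gt (hc (Fin.castSucc_lt_last _))
    have hdisj : top ⊓ E j = ⊥ :=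
      (hE_min j _ (L.inf_mem (hcL _) (hE j)) inf_le_right).resolve_right
        fun h => hj (h ▸ inf_le_left)
    -- The chain `c i ⊔ E j` (dropping the last `c`) stays strict because `E j` misses `top`.
    refine Nat.succ_le_of_lt (lt_of_le_of_lt (ih (J.erase j) (c := fun i => c i.castSucc ⊔ E j)
      (fun i => L.sup_mem (hcL _) (hE j)) ?_ ?_) (Finset.card_erase_lt_of_mem hjJ))
    · intro i₁ i₂ h
      refine sup_lt_sup_of_lt_of_inf_le_inf (hc (Fin.castSucc_lt_castSucc_iff.2 h)) ?_
      calc c i₂.castSucc ⊓ E j ≤ top ⊓ E j :=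
            inf_le_inf_right _ (hc.monotone (Fin.castSucc_le_castSucc_iff.2 (Fin.le_last _)))
        _ = ⊥ := hdisj
        _ ≤ _ := bot_le
    · calc c (Fin.last k).castSucc ⊔ E j ≤ c (Fin.last (k + 1)) ⊔ E j :=
            sup_le_sup_right (hc.monotone (Fin.le_last _)) _
        _ ≤ c 0 ⊔ J.sup E ⊔ E j := sup_le_sup_right hle _
        _ ≤ c 0 ⊔ J.sup E := sup_le le_rfl (le_sup_of_le_right (Finset.le_sup hjJ))
        _ = c 0 ⊔ E j ⊔ (J.erase j).sup E := by
            rw [sup_assoc, ← Finset.sup_insert, Finset.insert_erase hjJ]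

theorem Fin.strictMono_sup_filter_castSucc_lt {α : Type*} [SemilatticeSup α] [OrderBot α] {m : ℕ}
    {G : Fin m → α} (hG : ∀ j, ¬ G j ≤ (univ.erase j).sup G) :
    StrictMono fun i : Fin (m + 1) => (univ.filter fun j : Fin m => j.castSucc < i).sup G := by
  intro i₁ i₂ h
  refine lt_of_le_not_ge (Finset.sup_mono fun j hj => ?_)
    fun hle => hG (i₁.castPred (ne_last_of_lt h)) ?_
  · simp only [mem_filter, mem_univ, true_and] at hj ⊢
    exact hj.trans h
  · refine (Finset.le_sup ?_).trans (hle.trans (Finset.sup_mono fun j hj => ?_))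
    · simpa using h
    · simp only [mem_filter, mem_univ, true_and, mem_erase, ne_eq] at hj ⊢
      exact ⟨fun hj' => by simp [hj'] at hj, trivial⟩

namespace Module.Basis

variable {ι R M : Type*} [CommRing R] [AddCommGroup M] [Module R M] (b : Basis ι R M)

theorem span_image_le_span_image_iff [Nontrivial R] {s t : Set ι} :
    span R (b '' s) ≤ span R (b '' t) ↔ s ⊆ t :=
  ⟨fun h i hi => b.self_mem_span_image.1 (h (Submodule.subset_span ⟨i, hi, rfl⟩)),
    fun h => Submodule.span_mono (Set.image_mono h)⟩

theorem not_map_span_image_le_sup [Nontrivial R] {N κ : Type*} [AddCommGroup N] [Module R N]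
    {Φ : M →ₗ[R] N} (hΦ : Function.Injective Φ) {q : κ → Set ι} (hq : Pairwise (Disjoint on q))
    {j : κ} (hj : (q j).Nonempty) {J : Finset κ} (hjJ : j ∉ J) :
    ¬ (span R (b '' q j)).map Φ ≤ J.sup fun j' => (span R (b '' q j')).map Φ := by
  intro hle
  have hJ : (J.sup fun j' => (span R (b '' q j')).map Φ) ≤
      (span R (b '' (q j)ᶜ)).map Φ :=
    Finset.sup_le fun j' hj' => Submodule.map_mono <| (b.span_image_le_span_image_iff).2 <|
      Set.subset_compl_iff_disjoint_right.2 (hq (ne_of_mem_of_not_mem hj' hjJ))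
  have := (Submodule.map_le_map_iff_of_injective hΦ _ _).1 (hle.trans hJ)
  rw [b.span_image_le_span_image_iff, Set.subset_compl_iff_disjoint_right, disjoint_self] at this
  exact hj.ne_empty this

theorem iSup_span_image_eq_top {κ : Type*} {s : κ → Set ι} (hs : ⋃ j, s j = Set.univ) :
    ⨆ j, span R (b '' s j) = ⊤ := by
  rw [← Submodule.span_iUnion, ← Set.image_iUnion, hs, Set.image_univ, b.span_eq]

end Module.Basis

def InGeneratedStarAlgebra (R : Type*) {A ι : Type*} [CommSemiring R] [Semiring A] [Algebra R A]
    [Star A] (B : ι → A) (M : A) : Prop :=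
  ∀ S : Set A, (∀ k, B k ∈ S) → (1 : A) ∈ S → (∀ X ∈ S, ∀ Y ∈ S, ∀ α β : R, α • X + β • Y ∈ S) →
    (∀ X ∈ S, ∀ Y ∈ S, X * Y ∈ S) → (∀ X ∈ S, star X ∈ S) → M ∈ S

theorem InGeneratedStarAlgebra.mem_of_subalgebra {R A ι : Type*} [CommSemiring R] [StarRing R]
    [Semiring A] [StarRing A] [Algebra R A] [StarModule R A] {B : ι → A} {M : A}
    (hM : InGeneratedStarAlgebra R B M) (hB : ∀ k, IsSelfAdjoint (B k)) (S : Subalgebra R A)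
    (hBS : ∀ k, B k ∈ S) : M ∈ S :=
  -- `S` need not be closed under `star`, but `{X | X ∈ S ∧ star X ∈ S}` is.
  (hM {X | X ∈ S ∧ star X ∈ S} (fun k => ⟨hBS k, by rw [(hB k).star_eq]; exact hBS k⟩)
    ⟨S.one_mem, by rw [star_one]; exact S.one_mem⟩
    (fun X hX Y hY α β => ⟨add_mem (S.smul_mem hX.1 α) (S.smul_mem hY.1 β), by
      rw [star_add, star_smul, star_smul]; exact add_mem (S.smul_mem hX.2 _) (S.smul_mem hY.2 _)⟩)
    (fun X hX Y hY => ⟨mul_mem hX.1 hY.1, star_mul X Y ▸ mul_mem hY.2 hX.2⟩)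
    (fun X hX => ⟨hX.2, (star_star X).symm ▸ hX.1⟩)).1

namespace Matrix

variable {R m : Type*} [CommRing R] [Fintype m] [DecidableEq m]

def stabilizer (W : Submodule R (m → R)) : Subalgebra R (Matrix m m R) where
  carrier := {M | ∀ v ∈ W, M *ᵥ v ∈ W}
  mul_mem' {X Y} hX hY v hv := by
    simp only [Set.mem_ofPred_eq, ← mulVec_mulVec] at *
    exact hX _ (hY v hv)
  add_mem' {X Y} hX hY v hv := by
    simp only [Set.mem_ofPred_eq, add_mulVec] at *
    exact W.add_mem (hX v hv) (hY v hv)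
  algebraMap_mem' r v hv := by
    simpa only [Set.mem_ofPred_eq, Algebra.algebraMap_eq_smul_one, smul_mulVec, one_mulVec]
      using W.smul_mem r hv

theorem mem_stabilizer_map_of_mul_eq_mul {M N A : Matrix m m R} (h : M * A = A * N)
    {W : Submodule R (m → R)} (hN : N ∈ stabilizer W) :
    M ∈ stabilizer (W.map (mulVecLin A)) := by
  rintro _ ⟨v, hv, rfl⟩
  exact ⟨N *ᵥ v, hN v hv, by simp [mulVec_mulVec, h]⟩

theorem _root_.InGeneratedStarAlgebra.conj_mem_stabilizer_map [StarRing R] {ι : Type*}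
    {B : ι → Matrix m m R} {M : Matrix m m R} (hM : InGeneratedStarAlgebra R B M)
    (hB : ∀ k, IsSelfAdjoint (B k)) {T P : Matrix m m R} (hT : IsUnit T) (hP : P * star P = 1)
    {W : Submodule R (m → R)} (hW : ∀ k, T⁻¹ * B k * T ∈ stabilizer W) :
    star P * M * P ∈ stabilizer ((W.map (mulVecLin T)).map (mulVecLin (star P))) := by
  have hTT : T * T⁻¹ = 1 := mul_nonsing_inv T ((isUnit_iff_isUnit_det T).1 hT)
  refine mem_stabilizer_map_of_mul_eq_mul (N := M) (by simp only [Matrix.mul_assoc, hP, mul_one])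
    (hM.mem_of_subalgebra hB _ fun k => mem_stabilizer_map_of_mul_eq_mul ?_ (hW k))
  simp only [← Matrix.mul_assoc, hTT, one_mul]

def commonInvtSubmodule (S : Set (Matrix m m R)) : Sublattice (Submodule R (m → R)) :=
  ⨅ M ∈ S, invtSubmodule (mulVecLin M)

theorem mem_commonInvtSubmodule {S : Set (Matrix m m R)} {U : Submodule R (m → R)} :
    U ∈ commonInvtSubmodule S ↔ ∀ M ∈ S, M ∈ stabilizer U := by
  simp only [commonInvtSubmodule, Sublattice.mem_iInf]
  rfl

theorem bot_mem_commonInvtSubmodule (S : Set (Matrix m m R)) : ⊥ ∈ commonInvtSubmodule S :=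
  mem_commonInvtSubmodule.2 fun M _ v hv => by
    rw [(Submodule.mem_bot R).1 hv, mulVec_zero]
    exact zero_mem _

end Matrix

theorem finest_sbd_of_generators_general (n K ℓ : ℕ)
    (B : Fin K → Matrix (Fin n) (Fin n) ℂ)
    (hsa : ∀ k, star (B k) = B k)
    (P : Matrix (Fin n) (Fin n) ℂ)
    (hPunit : star P * P = 1 ∧ P * star P = 1)
    (s : Fin ℓ → Set (Fin n))
    (hcover : (⋃ j, s j) = Set.univ)
    -- conjugation by `P` block-diagonalizes every element of the generated *-algebra
    (hblock : ∀ M : Matrix (Fin n) (Fin n) ℂ,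
      (∀ S : Set (Matrix (Fin n) (Fin n) ℂ),
        (∀ k, B k ∈ S) → (1 : Matrix (Fin n) (Fin n) ℂ) ∈ S →
        (∀ X ∈ S, ∀ Y ∈ S, ∀ α β : ℂ, α • X + β • Y ∈ S) →
        (∀ X ∈ S, ∀ Y ∈ S, X * Y ∈ S) →
        (∀ X ∈ S, star X ∈ S) → M ∈ S) →
      ∀ j, ∀ v ∈ Submodule.span ℂ
          ((fun i => (Pi.single i 1 : Fin n → ℂ)) '' s j),
        (star P * M * P).mulVec v ∈ Submodule.span ℂ
          ((fun i => (Pi.single i 1 : Fin n → ℂ)) '' s j))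
    -- the block structure is the finest for the generated *-algebra:
    -- each block acts irreducibly on the corresponding coordinate subspace
    (hirr : ∀ j, ∀ U : Submodule ℂ (Fin n → ℂ),
      U ≤ Submodule.span ℂ ((fun i => (Pi.single i 1 : Fin n → ℂ)) '' s j) →
      (∀ M : Matrix (Fin n) (Fin n) ℂ,
        (∀ S : Set (Matrix (Fin n) (Fin n) ℂ),
          (∀ k, B k ∈ S) → (1 : Matrix (Fin n) (Fin n) ℂ) ∈ S →
          (∀ X ∈ S, ∀ Y ∈ S, ∀ α β : ℂ, α • X + β • Y ∈ S) →
          (∀ X ∈ S, ∀ Y ∈ S, X * Y ∈ S) →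
          (∀ X ∈ S, star X ∈ S) → M ∈ S) →
        ∀ v ∈ U, (star P * M * P).mulVec v ∈ U) →
      U = ⊥ ∨ U = Submodule.span ℂ ((fun i => (Pi.single i 1 : Fin n → ℂ)) '' s j)) :
    -- conclusion: no invertible matrix brings ℬ into a common block structure
    -- with strictly more blocks
    ∀ (T : Matrix (Fin n) (Fin n) ℂ), IsUnit T →
      ∀ (ℓ' : ℕ) (q : Fin ℓ' → Set (Fin n)),
        (∀ j j', j ≠ j' → Disjoint (q j) (q j')) →
        (⋃ j, q j) = Set.univ →
        (∀ j, (q j).Nonempty) →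
        (∀ k, ∀ j, ∀ v ∈ Submodule.span ℂ
            ((fun i => (Pi.single i 1 : Fin n → ℂ)) '' q j),
          (T⁻¹ * B k * T).mulVec v ∈ Submodule.span ℂ
            ((fun i => (Pi.single i 1 : Fin n → ℂ)) '' q j)) →
        ℓ' ≤ ℓ := by
  intro T hT ℓ' q hqdisj _ hqne hq
  set b := Pi.basisFun ℂ (Fin n)
  have hb : (fun i => (Pi.single i 1 : Fin n → ℂ)) = ⇑b :=
    funext fun i => (Pi.basisFun_apply ℂ (Fin n) i).symm
  rw [hb] at hblock hirr hq
  set L := commonInvtSubmodule ((fun M => star P * M * P) '' {M | InGeneratedStarAlgebra ℂ B M})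
  have mem_L {U : Submodule ℂ (Fin n → ℂ)} :
      U ∈ L ↔ ∀ M, InGeneratedStarAlgebra ℂ B M → star P * M * P ∈ stabilizer U := by
    rw [mem_commonInvtSubmodule, Set.forall_mem_image]
    rfl
  set Φ := mulVecLin (star P) ∘ₗ mulVecLin T
  have hΦ : Function.Injective Φ :=
    (mulVec_injective_of_isUnit ⟨⟨star P, P, hPunit.1, hPunit.2⟩, rfl⟩).comp
      (mulVec_injective_of_isUnit hT)
  set G : Fin ℓ' → Submodule ℂ (Fin n → ℂ) := fun j => (span ℂ (b '' q j)).map Φ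
  have hGL (j : Fin ℓ') : G j ∈ L := mem_L.2 fun M hM => by
    simpa only [G, Φ, Submodule.map_comp] using
      hM.conj_mem_stabilizer_map hsa hT hPunit.2 (hq · j)
  set c : Fin (ℓ' + 1) → Submodule ℂ (Fin n → ℂ) :=
    fun i => (univ.filter fun j : Fin ℓ' => j.castSucc < i).sup G
  have hcL (i : Fin (ℓ' + 1)) : c i ∈ L :=
    Finset.sup_induction (bot_mem_commonInvtSubmodule _) (fun _ h₁ _ h₂ => L.sup_mem h₁ h₂)
      fun j _ => hGL j
  have hc : StrictMono c := Fin.strictMono_sup_filter_castSucc_lt fun j =>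
    b.not_map_span_image_le_sup hΦ hqdisj (hqne j) (notMem_erase j univ)
  have htop : univ.sup (fun j => span ℂ (b '' s j)) = ⊤ := by
    rw [Finset.sup_univ_eq_iSup]
    exact b.iSup_span_image_eq_top hcover
  simpa using L.le_card_of_strictMono_of_le_sup (fun j => mem_L.2 fun M hM => hblock M hM j)
    (fun j U hU hle => hirr j U hle (mem_L.1 hU)) univ hcL hc
    (by rw [htop]; exact le_sup_of_le_right le_top)

/-- Proposition 2.1: if a unitary `P` brings the matrix *-algebra generated by a
finite set of self-adjoint matrices `ℬ` into its finest common block-diagonal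
form (each block acting irreducibly), then that block structure is also the
finest one for the generating set `ℬ` itself: no invertible matrix can bring all
elements of `ℬ` into a common block structure with more blocks. -/
theorem finest_sbd_of_generators (n K ℓ : ℕ)
    (B : Fin K → Matrix (Fin n) (Fin n) ℂ)
    (hsa : ∀ k, star (B k) = B k)
    (P : Matrix (Fin n) (Fin n) ℂ)
    (hPunit : star P * P = 1 ∧ P * star P = 1)
    (s : Fin ℓ → Set (Fin n))
    (hdisj : ∀ j j', j ≠ j' → Disjoint (s j) (s j'))
    (hcover : (⋃ j, s j) = Set.univ)
    (hne : ∀ j, (s j).Nonempty)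
    -- conjugation by `P` block-diagonalizes every element of the generated *-algebra
    (hblock : ∀ M : Matrix (Fin n) (Fin n) ℂ,
      (∀ S : Set (Matrix (Fin n) (Fin n) ℂ),
        (∀ k, B k ∈ S) → (1 : Matrix (Fin n) (Fin n) ℂ) ∈ S →
        (∀ X ∈ S, ∀ Y ∈ S, ∀ α β : ℂ, α • X + β • Y ∈ S) →
        (∀ X ∈ S, ∀ Y ∈ S, X * Y ∈ S) →
        (∀ X ∈ S, star X ∈ S) → M ∈ S) →
      ∀ j, ∀ v ∈ Submodule.span ℂ
          ((fun i => (Pi.single i 1 : Fin n → ℂ)) '' s j),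
        (star P * M * P).mulVec v ∈ Submodule.span ℂ
          ((fun i => (Pi.single i 1 : Fin n → ℂ)) '' s j))
    -- the block structure is the finest for the generated *-algebra:
    -- each block acts irreducibly on the corresponding coordinate subspace
    (hirr : ∀ j, ∀ U : Submodule ℂ (Fin n → ℂ),
      U ≤ Submodule.span ℂ ((fun i => (Pi.single i 1 : Fin n → ℂ)) '' s j) →
      (∀ M : Matrix (Fin n) (Fin n) ℂ,
        (∀ S : Set (Matrix (Fin n) (Fin n) ℂ),
          (∀ k, B k ∈ S) → (1 : Matrix (Fin n) (Fin n) ℂ) ∈ S →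
          (∀ X ∈ S, ∀ Y ∈ S, ∀ α β : ℂ, α • X + β • Y ∈ S) →
          (∀ X ∈ S, ∀ Y ∈ S, X * Y ∈ S) →
          (∀ X ∈ S, star X ∈ S) → M ∈ S) →
        ∀ v ∈ U, (star P * M * P).mulVec v ∈ U) →
      U = ⊥ ∨ U = Submodule.span ℂ ((fun i => (Pi.single i 1 : Fin n → ℂ)) '' s j)) :
    -- conclusion: no invertible matrix brings ℬ into a common block structure
    -- with strictly more blocks
    ∀ (T : Matrix (Fin n) (Fin n) ℂ), IsUnit T →
      ∀ (ℓ' : ℕ) (q : Fin ℓ' → Set (Fin n)),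
        (∀ j j', j ≠ j' → Disjoint (q j) (q j')) →
        (⋃ j, q j) = Set.univ →
        (∀ j, (q j).Nonempty) →
        (∀ k, ∀ j, ∀ v ∈ Submodule.span ℂ
            ((fun i => (Pi.single i 1 : Fin n → ℂ)) '' q j),
          (T⁻¹ * B k * T).mulVec v ∈ Submodule.span ℂ
            ((fun i => (Pi.single i 1 : Fin n → ℂ)) '' q j)) →
        ℓ' ≤ ℓ :=
  finest_sbd_of_generators_general n K ℓ B hsa P hPunit s hcover hblock hirr
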